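/- In the type A construction, each X_t is marginally Poisson with mean μ. -/

import Mathlib

open MeasureTheory Finset

/-- Poisson probability mass function with mean `μ`. -/
noncomputable def poissonPmf (μ : ℝ) (k : ℕ) : ℝ :=
  Real.exp (-μ) * μ ^ k / (Nat.factorial k : ℝ)

/-- Binomial probability mass function with `n` trials and success probability `α`. -/
def binomPmf (n : ℕ) (α : ℝ) (k : ℕ) : ℝ :=
  (n.choose k : ℝ) * α ^ k * (1 - α) ^ (n - k)

/-!
By `hjoint`, the events `E x = {((W (t - i), Y (t - i))ᵢ, ε) = x}`, which cover `Ω`, carry the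
point masses of the product measure `typeAMeasure μ d a` on the countable space
`(Fin (p + 1) → ℕ × ℕ) × ℕ`, where `a i = α (t - i)` and `d = μ (1 - ∑ a)`. In that product model
the `Y`-coordinates and `ε` are independent, and Poisson thinning gives `Y (t - i) ~ Po(μ a i)`;
so `∑ Y (t - i) + ε` is a sum of independent Poisson variables of total rate `μ ∑ a + d = μ`.
Matching point masses on a cover transfers this law to `X` under `ℙ`.
-/

section

-- Opened only in this section: its notation `ℙ` would capture the measure `ℙ` of the theorem.
open ProbabilityTheory
open scoped NNReal Nat

lemma poissonPmf_nonneg {m : ℝ} (hm : 0 ≤ m) (k : ℕ) : 0 ≤ poissonPmf m k := by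
  unfold poissonPmf
  positivity

lemma binomPmf_nonneg {a : ℝ} (ha₀ : 0 ≤ a) (ha₁ : a ≤ 1) (n k : ℕ) : 0 ≤ binomPmf n a k := by
  have : 0 ≤ 1 - a := by linarith
  unfold binomPmf
  positivity

lemma poissonMeasure_toNNReal_singleton {r : ℝ} (hr : 0 ≤ r) (n : ℕ) :
    poissonMeasure r.toNNReal {n} = ENNReal.ofReal (poissonPmf r n) := by
  rw [poissonMeasure_singleton, Real.coe_toNNReal r hr, poissonPmf]

lemma poissonMeasure_zero : poissonMeasure 0 = Measure.dirac 0 := by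
  refine Measure.ext_of_singleton fun n => ?_
  rcases n with _ | n <;> simp [poissonMeasure_singleton]

lemma hasSum_poissonPmf_mul_binomPmf (m a : ℝ) (y : ℕ) :
    HasSum (fun w => poissonPmf m w * binomPmf w a y) (poissonPmf (m * a) y) := by
  have hvanish : ∀ w ∉ Set.range (· + y), poissonPmf m w * binomPmf w a y = 0 := by
    intro w hw
    have hwy : w < y := by
      by_contra h
      exact hw ⟨w - y, by simp only; omega⟩
    simp [binomPmf, Nat.choose_eq_zero_of_lt hwy]
  rw [← (add_left_injective y).hasSum_iff hvanish]
  have hterm (j : ℕ) : poissonPmf m (j + y) * binomPmf (j + y) a y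
      = Real.exp (-m) * (m * a) ^ y / y ! * ((m * (1 - a)) ^ j / j !) := by
    rw [poissonPmf, binomPmf, Nat.cast_choose ℝ (Nat.le_add_left y j), Nat.add_sub_cancel,
      mul_pow, mul_pow, pow_add]
    field_simp
  have hexp := (NormedSpace.expSeries_div_hasSum_exp (m * (1 - a))).mul_left
    (Real.exp (-m) * (m * a) ^ y / y !)
  rw [← Real.exp_eq_exp_ℝ, mul_comm _ (Real.exp _), ← mul_div_assoc, ← mul_assoc, ← Real.exp_add,
    show m * (1 - a) + -m = -(m * a) by ring] at hexp
  simp only [Function.comp_def, hterm]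
  exact hexp

lemma hasLaw_sum_poissonMeasure {Ω ι : Type*} [MeasurableSpace Ω] {P : Measure Ω}
    [IsProbabilityMeasure P] {Y : ι → Ω → ℕ} {r : ι → ℝ≥0} (hind : iIndepFun Y P)
    (hmeas : ∀ i, Measurable (Y i)) (hY : ∀ i, HasLaw (Y i) (poissonMeasure (r i)) P)
    (s : Finset ι) : HasLaw (∑ i ∈ s, Y i) (poissonMeasure (∑ i ∈ s, r i)) P := by
  classical
  induction s using Finset.induction_on with
  | empty =>
    rw [sum_empty, sum_empty, poissonMeasure_zero]
    exact hasLaw_dirac_of_ae_eq (ae_of_all _ fun _ => rfl)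
  | insert i s hi ih =>
    rw [sum_insert hi, sum_insert hi, add_comm, add_comm (r i)]
    exact (hind.indepFun_finsetSum_of_notMem hmeas hi).hasLaw_add_poissonMeasure ih (hY i)

noncomputable def thinnedPoissonMeasure (m a : ℝ) : Measure (ℕ × ℕ) :=
  Measure.sum fun q => ENNReal.ofReal (poissonPmf m q.1 * binomPmf q.1 a q.2) • Measure.dirac q

lemma thinnedPoissonMeasure_singleton (m a : ℝ) (q : ℕ × ℕ) :
    thinnedPoissonMeasure m a {q} = ENNReal.ofReal (poissonPmf m q.1 * binomPmf q.1 a q.2) :=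
  Measure.sum_smul_dirac_singleton

lemma hasLaw_snd_thinnedPoissonMeasure {m a : ℝ} (hm : 0 ≤ m) (ha₀ : 0 ≤ a) (ha₁ : a ≤ 1) :
    HasLaw Prod.snd (poissonMeasure (m * a).toNNReal) (thinnedPoissonMeasure m a) where
  map_eq := by
    refine Measure.ext_of_singleton fun y => ?_
    have hthin := hasSum_poissonPmf_mul_binomPmf m a y
    rw [Measure.map_apply measurable_snd (measurableSet_singleton y),
      measure_preimage_snd_singleton_eq_tsum, poissonMeasure_toNNReal_singleton (mul_nonneg hm ha₀),
      ← hthin.tsum_eq, ENNReal.ofReal_tsum_of_nonneg (fun w => mul_nonneg (poissonPmf_nonneg hm w)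
        (binomPmf_nonneg ha₀ ha₁ w y)) hthin.summable]
    simp only [thinnedPoissonMeasure_singleton]

noncomputable def typeAMeasure {ι : Type*} [Fintype ι] (m d : ℝ) (a : ι → ℝ) :
    Measure ((ι → ℕ × ℕ) × ℕ) :=
  (Measure.pi fun i => thinnedPoissonMeasure m (a i)).prod (poissonMeasure d.toNNReal)

section typeAMeasure

variable {ι : Type*} [Fintype ι] {m d : ℝ} {a : ι → ℝ}

lemma typeAMeasure_singleton (hm : 0 ≤ m) (hd : 0 ≤ d) (ha₀ : ∀ i, 0 ≤ a i) (ha₁ : ∀ i, a i ≤ 1)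
    (x : (ι → ℕ × ℕ) × ℕ) :
    typeAMeasure m d a {x} = ENNReal.ofReal
      ((∏ i, poissonPmf m (x.1 i).1 * binomPmf (x.1 i).1 (a i) (x.1 i).2) * poissonPmf d x.2) := by
  have := fun i => (hasLaw_snd_thinnedPoissonMeasure hm (ha₀ i) (ha₁ i)).isProbabilityMeasure
  have hthin i : 0 ≤ poissonPmf m (x.1 i).1 * binomPmf (x.1 i).1 (a i) (x.1 i).2 :=
    mul_nonneg (poissonPmf_nonneg hm _) (binomPmf_nonneg (ha₀ i) (ha₁ i) _ _)
  rw [typeAMeasure, ← Prod.mk.eta (p := x), ← Set.singleton_prod_singleton, Measure.prod_prod,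
    Measure.pi_singleton, poissonMeasure_toNNReal_singleton hd,
    ENNReal.ofReal_mul (prod_nonneg fun i _ => hthin i),
    ENNReal.ofReal_prod_of_nonneg fun i _ => hthin i]
  simp only [thinnedPoissonMeasure_singleton]

lemma hasLaw_typeAMeasure (hm : 0 ≤ m) (hd : 0 ≤ d) (ha₀ : ∀ i, 0 ≤ a i) (ha₁ : ∀ i, a i ≤ 1) :
    HasLaw (fun x : (ι → ℕ × ℕ) × ℕ => ∑ i, (x.1 i).2 + x.2)
      (poissonMeasure (m * ∑ i, a i + d).toNNReal) (typeAMeasure m d a) := by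
  have hthin i := hasLaw_snd_thinnedPoissonMeasure hm (ha₀ i) (ha₁ i)
  have := fun i => (hthin i).isProbabilityMeasure
  have hY : HasLaw (fun x : ι → ℕ × ℕ => ∑ i, (x i).2) (poissonMeasure (∑ i, (m * a i).toNNReal))
      (Measure.pi fun i => thinnedPoissonMeasure m (a i)) := by
    have := hasLaw_sum_poissonMeasure (iIndepFun_pi (X := fun _ => Prod.snd) fun _ => by fun_prop)
      (fun i => by fun_prop) (fun i => (hthin i).comp
        (measurePreserving_eval (fun i => thinnedPoissonMeasure m (a i)) i).hasLaw) univ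
    simpa only [sum_fn] using this
  have hrate : (m * ∑ i, a i + d).toNNReal = ∑ i, (m * a i).toNNReal + d.toNNReal := by
    rw [mul_sum, Real.toNNReal_add (sum_nonneg fun i _ => mul_nonneg hm (ha₀ i)) hd,
      Real.toNNReal_sum_of_nonneg fun i _ => mul_nonneg hm (ha₀ i)]
  rw [hrate]
  exact (indepFun_prod (X := fun x : ι → ℕ × ℕ => ∑ i, (x i).2) (Y := id) (by fun_prop)
    measurable_id).hasLaw_add_poissonMeasure (hY.comp measurePreserving_fst.hasLaw)
    (HasLaw.id.comp measurePreserving_snd.hasLaw)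

end typeAMeasure

/-- No measurability of `E x` or `X` is needed: countable subadditivity bounds both
`Q (X ⁻¹' s)` and `Q (X ⁻¹' sᶜ)` from above, and the two bounds add up to `1`. -/
lemma measure_preimage_eq_of_cover {Ω Ω' β : Type*} [MeasurableSpace Ω] [MeasurableSpace Ω']
    [Countable Ω'] [MeasurableSingletonClass Ω'] {Q : Measure Ω} [IsProbabilityMeasure Q]
    {P : Measure Ω'} [IsProbabilityMeasure P] {E : Ω' → Set Ω} (hcover : ∀ ω, ∃ x, ω ∈ E x)
    (hE : ∀ x, Q (E x) = P {x}) {X : Ω → β} {c : Ω' → β} (hX : ∀ x, ∀ ω ∈ E x, X ω = c x)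
    (s : Set β) : Q (X ⁻¹' s) = P (c ⁻¹' s) := by
  have hle (s : Set β) : Q (X ⁻¹' s) ≤ P (c ⁻¹' s) := calc
    Q (X ⁻¹' s) ≤ Q (⋃ x ∈ c ⁻¹' s, E x) := measure_mono fun ω hω => by
      obtain ⟨x, hx⟩ := hcover ω
      exact Set.mem_biUnion (show c x ∈ s from hX x ω hx ▸ hω) hx
    _ ≤ ∑' x : c ⁻¹' s, Q (E x) := measure_biUnion_le _ (Set.to_countable _) _
    _ = ∑' x : c ⁻¹' s, P (id ⁻¹' {x.1}) := tsum_congr fun x => hE x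
    _ = P (c ⁻¹' s) := tsum_measure_preimage_singleton (Set.to_countable _)
      fun _ _ => measurableSet_singleton _
  refine le_antisymm (hle s) ?_
  have hsplit : 1 ≤ Q (X ⁻¹' s) + (1 - P (c ⁻¹' s)) := calc
    1 = Q (X ⁻¹' s ∪ X ⁻¹' sᶜ) := by
      rw [← Set.preimage_union, Set.union_compl_self, Set.preimage_univ, measure_univ]
    _ ≤ Q (X ⁻¹' s) + Q (X ⁻¹' sᶜ) := measure_union_le _ _
    _ ≤ Q (X ⁻¹' s) + (1 - P (c ⁻¹' s)) := by
      gcongr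
      rw [← prob_compl_eq_one_sub (Set.to_countable _).measurableSet, ← Set.preimage_compl]
      exact hle sᶜ
  rwa [← tsub_le_iff_right, ENNReal.sub_sub_cancel ENNReal.one_ne_top prob_le_one] at hsplit

end

theorem typeA_marginal_poisson_general {Ω : Type*} [MeasurableSpace Ω]
    (ℙ : Measure Ω) [IsProbabilityMeasure ℙ]
    (p : ℕ) (μ : ℝ) (hμ : 0 < μ) (α : ℤ → ℝ) (t : ℤ)
    (hα : ∀ s : ℤ, 0 ≤ α s)
    (hsum : ∑ i ∈ Finset.range (p + 1), α (t - i) < 1)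
    (W Y : ℤ → Ω → ℕ) (ε : Ω → ℕ) (X : Ω → ℕ)
    (hX : ∀ ω, X ω = (∑ i ∈ Finset.range (p + 1), Y (t - i) ω) + ε ω)
    (hjoint : ∀ (w y : ℕ → ℕ) (e : ℕ),
      ℙ {ω | (∀ i ∈ Finset.range (p + 1), W (t - i) ω = w i ∧ Y (t - i) ω = y i) ∧ ε ω = e}
        = ENNReal.ofReal
            ((∏ i ∈ Finset.range (p + 1),
                poissonPmf μ (w i) * binomPmf (w i) (α (t - i)) (y i))
              * poissonPmf (μ * (1 - ∑ i ∈ Finset.range (p + 1), α (t - i))) e)) :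
    ∀ n : ℕ, ℙ {ω | X ω = n} = ENNReal.ofReal (poissonPmf μ n) := by
  intro n
  set d := μ * (1 - ∑ i ∈ range (p + 1), α (t - i))
  let a (i : Fin (p + 1)) : ℝ := α (t - (i : ℕ))
  have hsum_a : ∑ i, a i = ∑ i ∈ range (p + 1), α (t - i) :=
    Fin.sum_univ_eq_sum_range (fun i => α (t - i)) _
  have ha₁ i : a i ≤ 1 :=
    (single_le_sum (f := a) (fun i _ => hα _) (mem_univ i)).trans (hsum_a.trans_lt hsum).le
  have hd : 0 ≤ d := mul_nonneg hμ.le (by linarith)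
  have hlaw := hasLaw_typeAMeasure hμ.le hd (fun i => hα _) ha₁
  rw [show μ * ∑ i, a i + d = μ by rw [hsum_a]; ring] at hlaw
  have := hlaw.isProbabilityMeasure
  let E (x : (Fin (p + 1) → ℕ × ℕ) × ℕ) : Set Ω :=
    {ω | (∀ i ∈ range (p + 1), W (t - i) ω = (x.1 (Fin.ofNat (p + 1) i)).1 ∧
      Y (t - i) ω = (x.1 (Fin.ofNat (p + 1) i)).2) ∧ ε ω = x.2}
  have hcover ω : ∃ x, ω ∈ E x := by
    refine ⟨(fun i => (W (t - (i : ℕ)) ω, Y (t - (i : ℕ)) ω), ε ω), fun i hi => ?_, rfl⟩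
    simp [Nat.mod_eq_of_lt (mem_range.1 hi)]
  have hE x : ℙ (E x) = typeAMeasure μ d a {x} := by
    rw [hjoint, typeAMeasure_singleton hμ.le hd (fun i => hα _) ha₁,
      ← Fin.prod_univ_eq_prod_range]
    simp only [Fin.ofNat_eq_cast, Fin.cast_val_eq_self]
  have hXE x : ∀ ω ∈ E x, X ω = ∑ i, (x.1 i).2 + x.2 := by
    rintro ω ⟨hWY, hε⟩
    rw [hX, hε, sum_congr rfl fun i hi => (hWY i hi).2, ← Fin.sum_univ_eq_sum_range]
    simp only [Fin.ofNat_eq_cast, Fin.cast_val_eq_self]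
  calc ℙ {ω | X ω = n} = typeAMeasure μ d a {x | ∑ i, (x.1 i).2 + x.2 = n} :=
        measure_preimage_eq_of_cover hcover hE hXE {n}
    _ = ProbabilityTheory.poissonMeasure μ.toNNReal {n} :=
        hlaw.measure_eq (p := (· = n)) .of_discrete
    _ = ENNReal.ofReal (poissonPmf μ n) := poissonMeasure_toNNReal_singleton hμ.le n

/-- Type A construction: `W_t ~ Po(μ)` iid, `Y_t | W_t ~ Bin(w_t, α_t)` independently,
and `X_t - ∑_{i=0}^p Y_{t-i} | Y ~ Po(μ(1 - ∑_{i=0}^p α_{t-i}))` (the residual `ε`).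
Then `X_t` is marginally `Po(μ)`. -/
theorem typeA_marginal_poisson {Ω : Type*} [MeasurableSpace Ω]
    (ℙ : Measure Ω) [IsProbabilityMeasure ℙ]
    (p : ℕ) (μ : ℝ) (hμ : 0 < μ) (α : ℤ → ℝ) (t : ℤ) (ht : 1 ≤ t)
    (hα : ∀ s : ℤ, 0 ≤ α s)
    (hsum : ∑ i ∈ Finset.range (p + 1), α (t - i) < 1)
    (W Y : ℤ → Ω → ℕ) (ε : Ω → ℕ) (X : Ω → ℕ)
    (hX : ∀ ω, X ω = (∑ i ∈ Finset.range (p + 1), Y (t - i) ω) + ε ω)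
    (hjoint : ∀ (w y : ℕ → ℕ) (e : ℕ),
      ℙ {ω | (∀ i ∈ Finset.range (p + 1), W (t - i) ω = w i ∧ Y (t - i) ω = y i) ∧ ε ω = e}
        = ENNReal.ofReal
            ((∏ i ∈ Finset.range (p + 1),
                poissonPmf μ (w i) * binomPmf (w i) (α (t - i)) (y i))
              * poissonPmf (μ * (1 - ∑ i ∈ Finset.range (p + 1), α (t - i))) e)) :
    ∀ n : ℕ, ℙ {ω | X ω = n} = ENNReal.ofReal (poissonPmf μ n) :=
  typeA_marginal_poisson_general ℙ p μ hμ α t hα hsum W Y ε X hX hjoint
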